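/- The map U defined on basis vectors extends to a unitary operator from H ⊕ H onto 𝓗, and it intertwines the diagonal operators: for every basis vector ξ of H ⊕ H one has D(Uξ) = U((D₁ ⊕ |D₂|)ξ); consequently U(D₁ ⊕ |D₂|)U* = D. -/

import Mathlib

noncomputable section

open Real

/-- Validity of an index triple `(N, I, J)` encoding `n = N/2`, `i = I/2`, `j = J/2`, with
`n ∈ ½ℤ₊` and `i, j ∈ {-n, -n+1, …, n}` (so `|I| ≤ N`, `|J| ≤ N` and `I ≡ J ≡ N (mod 2)`). -/
abbrev validH (x : ℤ × ℤ × ℤ) : Prop :=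
  0 ≤ x.1 ∧ |x.2.1| ≤ x.1 ∧ |x.2.2| ≤ x.1 ∧
    (x.1 + x.2.1) % 2 = 0 ∧ (x.1 + x.2.2) % 2 = 0

abbrev IdxH : Type := {x : ℤ × ℤ × ℤ // validH x}

/-- The Hilbert space `H = L₂(h)` with orthonormal basis `e^(n)_{ij}`. -/
abbrev Hsp : Type := lp (fun _ : IdxH => ℂ) 2

/-- The basis vector `e^(n)_{ij}` of `H`, where `n = N/2`, `i = I/2`, `j = J/2`;
it is `0` if the indices are out of range. -/
def eH (N I J : ℤ) : Hsp :=
  if h : validH (N, I, J) then lp.single 2 (⟨(N, I, J), h⟩ : IdxH) (1 : ℂ) else 0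

/-- Validity of an index triple `(N, I, J)` (with `n = N/2`, `i = I/2`, `j = J/2`) for the basis
vectors `u^n_{ij}` of `𝓗`: `n ∈ ½ℤ₊`, `i ∈ {-n, …, n}`, `j ∈ {-n-1/2, …, n+1/2}`. -/
abbrev validU (x : ℤ × ℤ × ℤ) : Prop :=
  0 ≤ x.1 ∧ |x.2.1| ≤ x.1 ∧ (x.1 + x.2.1) % 2 = 0 ∧
    |x.2.2| ≤ x.1 + 1 ∧ (x.1 + 1 + x.2.2) % 2 = 0

/-- Validity of an index triple `(N, I, J)` (with `n = N/2`, `i = I/2`, `j = J/2`) for the basis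
vectors `d^n_{ij}` of `𝓗`: `n ≥ 1/2`, `i ∈ {-n, …, n}`, `j ∈ {-n+1/2, …, n-1/2}`. -/
abbrev validD (x : ℤ × ℤ × ℤ) : Prop :=
  1 ≤ x.1 ∧ |x.2.1| ≤ x.1 ∧ (x.1 + x.2.1) % 2 = 0 ∧
    |x.2.2| ≤ x.1 - 1 ∧ (x.1 + 1 + x.2.2) % 2 = 0

abbrev IdxW : Type := {x : ℤ × ℤ × ℤ // validU x} ⊕ {x : ℤ × ℤ × ℤ // validD x}

/-- The Hilbert space `𝓗` with orthonormal basis `{u^n_{ij}} ∪ {d^n_{ij}}`. -/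
abbrev Wsp : Type := lp (fun _ : IdxW => ℂ) 2

/-- The basis vector `u^n_{ij}` of `𝓗` (zero if out of range). -/
def eU (N I J : ℤ) : Wsp :=
  if h : validU (N, I, J) then lp.single 2 (Sum.inl ⟨(N, I, J), h⟩ : IdxW) (1 : ℂ) else 0

/-- The basis vector `d^n_{ij}` of `𝓗` (zero if out of range, in particular for
`j = ±(n+1/2)`). -/
def eD (N I J : ℤ) : Wsp :=
  if h : validD (N, I, J) then lp.single 2 (Sum.inr ⟨(N, I, J), h⟩ : IdxW) (1 : ℂ) else 0

/-- The Hilbert space `H ⊕ H`. -/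
abbrev Ksp : Type := WithLp 2 (Hsp × Hsp)

/-- `v ⊕ 0` as an element of `H ⊕ H` -/
def eK1 (v : Hsp) : Ksp := (WithLp.equiv 2 (Hsp × Hsp)).symm (v, 0)

/-- `0 ⊕ v` as an element of `H ⊕ H` -/
def eK2 (v : Hsp) : Ksp := (WithLp.equiv 2 (Hsp × Hsp)).symm (0, v)

/-- `U : H ⊕ H → 𝓗` acts on the basis vectors by `U(e^(n)_{ij} ⊕ 0) = d^n_{i,j+1/2}` for
`-n ≤ j ≤ n-1`, `U(e^(n)_{in} ⊕ 0) = u^n_{i,n+1/2}`, and `U(0 ⊕ e^(n)_{ij}) = u^n_{i,j-1/2}`. -/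
def IsUmap (U : Ksp ≃ₗᵢ[ℂ] Wsp) : Prop :=
  (∀ N I J : ℤ, validH (N, I, J) → J ≠ N → U (eK1 (eH N I J)) = eD N I (J + 1)) ∧
  (∀ N I : ℤ, validH (N, I, N) → U (eK1 (eH N I N)) = eU N I (N + 1)) ∧
  (∀ N I J : ℤ, validH (N, I, J) → U (eK2 (eH N I J)) = eU N I (J - 1))

/-- the basis vectors of `H ⊕ H`, indexed by `IdxH ⊕ IdxH` -/
def eKb : IdxH ⊕ IdxH → Ksp :=
  Sum.elim (fun x => eK1 (lp.single 2 x 1)) (fun x => eK2 (lp.single 2 x 1))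

/-- the eigenvalue of `D₁ ⊕ |D₂|` on the corresponding basis vector of `H ⊕ H`:
`D₁ e^(n)_{ij} = -2n e^(n)_{ij}` for `j ≠ n`, `D₁ e^(n)_{in} = (2n+1) e^(n)_{in}`, and
`|D₂| e^(n)_{ij} = (2n+1) e^(n)_{ij}` -/
def lamK : IdxH ⊕ IdxH → ℝ :=
  Sum.elim (fun x => if x.1.2.2 = x.1.1 then (x.1.1 : ℝ) + 1 else -(x.1.1 : ℝ))
    (fun x => (x.1.1 : ℝ) + 1)

/-- the eigenvalue of `D` on a basis vector of `𝓗`: `D u^n_{ij} = (2n+1) u^n_{ij}` and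
`D d^n_{ij} = -2n d^n_{ij}` -/
def muW : IdxW → ℝ :=
  Sum.elim (fun u => (u.1.1 : ℝ) + 1) (fun d => -(d.1.1 : ℝ))

/-! The prescription for `U` is a bijection `idxEquiv` between the index set of the Hilbert basis
`{e ⊕ 0} ∪ {0 ⊕ e}` of `H ⊕ H` and that of the standard basis `{u} ∪ {d}` of `𝓗`: shifting `j` by
`±1/2` keeps `n`, and `e_{in} ⊕ 0`, the only `e ⊕ 0` of eigenvalue `2n+1`, is the only one sent to a
`u`. So the eigenvalues match, and the coordinate map of the Hilbert basis reindexed along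
`idxEquiv` is the required unitary. -/

namespace HilbertBasis

variable {ι ι' κ 𝕜 E F : Type*} [RCLike 𝕜] [NormedAddCommGroup E] [InnerProductSpace 𝕜 E]

theorem eq_zero_of_forall_inner_eq_zero (b : HilbertBasis ι 𝕜 E) {x : E}
    (h : ∀ i, inner 𝕜 (b i) x = 0) : x = 0 :=
  b.repr.injective <| lp.ext <| funext fun i => by simp [b.repr_apply_apply, h]

theorem default_apply [DecidableEq ι] (i : ι) :
    (default : HilbertBasis ι 𝕜 (lp (fun _ : ι => 𝕜) 2)) i = lp.single 2 i 1 :=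
  (default : HilbertBasis ι 𝕜 (lp (fun _ : ι => 𝕜) 2)).repr_symm_single i |>.symm

variable [CompleteSpace E] [NormedAddCommGroup F] [InnerProductSpace 𝕜 F] [CompleteSpace F]

protected def reindex (b : HilbertBasis ι 𝕜 E) (e : ι ≃ ι') : HilbertBasis ι' 𝕜 E :=
  HilbertBasis.mk (b.orthonormal.comp _ e.symm.injective)
    (by rw [e.symm.surjective.range_comp, b.dense_span])

@[simp]
theorem reindex_apply (b : HilbertBasis ι 𝕜 E) (e : ι ≃ ι') (i : ι) :
    b.reindex e (e i) = b i := by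
  simp [HilbertBasis.reindex]

protected def prod (b₁ : HilbertBasis ι 𝕜 E) (b₂ : HilbertBasis κ 𝕜 F) :
    HilbertBasis (ι ⊕ κ) 𝕜 (WithLp 2 (E × F)) :=
  HilbertBasis.mkOfOrthogonalEqBot
    (v := Sum.elim (fun i => WithLp.toLp 2 (b₁ i, 0)) (fun j => WithLp.toLp 2 (0, b₂ j)))
    (by
      classical
      rw [orthonormal_iff_ite]
      rintro (i | i) (j | j) <;>
        simp [orthonormal_iff_ite.mp b₁.orthonormal, orthonormal_iff_ite.mp b₂.orthonormal])
    (by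
      refine (Submodule.eq_bot_iff _).2 fun x hx => ?_
      have hv (k : ι ⊕ κ) := Submodule.inner_right_of_mem_orthogonal
        (Submodule.subset_span (Set.mem_range_self k)) hx
      have h₁ : x.fst = 0 :=
        b₁.eq_zero_of_forall_inner_eq_zero fun i => by simpa using hv (.inl i)
      have h₂ : x.snd = 0 :=
        b₂.eq_zero_of_forall_inner_eq_zero fun j => by simpa using hv (.inr j)
      exact WithLp.ofLp_injective 2 (Prod.ext h₁ h₂))

@[simp]
theorem prod_apply_inl (b₁ : HilbertBasis ι 𝕜 E) (b₂ : HilbertBasis κ 𝕜 F) (i : ι) :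
    b₁.prod b₂ (.inl i) = WithLp.toLp 2 (b₁ i, 0) := by
  simp [HilbertBasis.prod]

@[simp]
theorem prod_apply_inr (b₁ : HilbertBasis ι 𝕜 E) (b₂ : HilbertBasis κ 𝕜 F) (j : κ) :
    b₁.prod b₂ (.inr j) = WithLp.toLp 2 (0, b₂ j) := by
  simp [HilbertBasis.prod]

end HilbertBasis

section Indices

variable {N I J : ℤ}

theorem validU_of_validH_top (h : validH (N, I, N)) : validU (N, I, N + 1) := by
  simp only [validH, validU, abs_le] at h ⊢; omega

theorem validD_of_validH (h : validH (N, I, J)) (hJ : J ≠ N) : validD (N, I, J + 1) := by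
  simp only [validH, validD, abs_le] at h ⊢; omega

theorem validU_of_validH (h : validH (N, I, J)) : validU (N, I, J - 1) := by
  simp only [validH, validU, abs_le] at h ⊢; omega

theorem validH_of_validU_top (h : validU (N, I, N + 1)) : validH (N, I, N) := by
  simp only [validH, validU, abs_le] at h ⊢; omega

theorem validH_of_validU (h : validU (N, I, J)) (hJ : J ≠ N + 1) : validH (N, I, J + 1) := by
  simp only [validH, validU, abs_le] at h ⊢; omega

theorem validH_of_validD (h : validD (N, I, J)) : validH (N, I, J - 1) := by
  simp only [validH, validD, abs_le] at h ⊢; omega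

def idxEquiv : IdxH ⊕ IdxH ≃ IdxW where
  toFun
    | .inl ⟨(N, I, J), h⟩ =>
      if hJ : J = N then .inl ⟨(N, I, N + 1), validU_of_validH_top (hJ ▸ h)⟩
      else .inr ⟨(N, I, J + 1), validD_of_validH h hJ⟩
    | .inr ⟨(N, I, J), h⟩ => .inl ⟨(N, I, J - 1), validU_of_validH h⟩
  invFun
    | .inl ⟨(N, I, J), h⟩ =>
      if hJ : J = N + 1 then .inl ⟨(N, I, N), validH_of_validU_top (hJ ▸ h)⟩
      else .inr ⟨(N, I, J + 1), validH_of_validU h hJ⟩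
    | .inr ⟨(N, I, J), h⟩ => .inl ⟨(N, I, J - 1), validH_of_validD h⟩
  left_inv := by
    rintro (⟨⟨N, I, J⟩, h⟩ | ⟨⟨N, I, J⟩, h⟩)
    · by_cases hJ : J = N
      · subst hJ; simp
      · simp [hJ]
    · have : J - 1 ≠ N + 1 := by simp only [validH, abs_le] at h; omega
      simp [this]
  right_inv := by
    rintro (⟨⟨N, I, J⟩, h⟩ | ⟨⟨N, I, J⟩, h⟩)
    · by_cases hJ : J = N + 1
      · subst hJ; simp
      · simp [hJ]
    · have : J - 1 ≠ N := by simp only [validD, abs_le] at h; omega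
      simp [this]

theorem idxEquiv_inl_of_ne (h : validH (N, I, J)) (hJ : J ≠ N) :
    idxEquiv (.inl ⟨(N, I, J), h⟩) = .inr ⟨(N, I, J + 1), validD_of_validH h hJ⟩ := by
  simp [idxEquiv, hJ]

theorem idxEquiv_inl_top (h : validH (N, I, N)) :
    idxEquiv (.inl ⟨(N, I, N), h⟩) = .inl ⟨(N, I, N + 1), validU_of_validH_top h⟩ := by
  simp [idxEquiv]

theorem idxEquiv_inr (h : validH (N, I, J)) :
    idxEquiv (.inr ⟨(N, I, J), h⟩) = .inl ⟨(N, I, J - 1), validU_of_validH h⟩ := rfl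

end Indices

theorem muW_idxEquiv (ξ : IdxH ⊕ IdxH) : muW (idxEquiv ξ) = lamK ξ := by
  rcases ξ with ⟨⟨N, I, J⟩, h⟩ | ⟨⟨N, I, J⟩, h⟩
  · by_cases hJ : J = N
    · subst hJ; simp [idxEquiv_inl_top, muW, lamK]
    · simp [idxEquiv_inl_of_ne h hJ, muW, lamK, hJ]
  · simp [idxEquiv_inr, muW, lamK]

def basisK : HilbertBasis (IdxH ⊕ IdxH) ℂ Ksp := HilbertBasis.prod default default

theorem coe_basisK : ⇑basisK = eKb := by
  funext ξ
  rcases ξ with x | x <;> simp [basisK, eKb, eK1, eK2, HilbertBasis.default_apply]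

def unitaryU : Ksp ≃ₗᵢ[ℂ] Wsp := (basisK.reindex idxEquiv).repr

theorem unitaryU_eKb (ξ : IdxH ⊕ IdxH) : unitaryU (eKb ξ) = lp.single 2 (idxEquiv ξ) 1 := by
  rw [unitaryU, ← coe_basisK, ← basisK.reindex_apply idxEquiv, HilbertBasis.repr_self]

theorem isUmap_unitaryU : IsUmap unitaryU := by
  refine ⟨fun N I J h hJ => ?_, fun N I h => ?_, fun N I J h => ?_⟩
  · rw [eH, dif_pos h, eD, dif_pos (validD_of_validH h hJ), ← idxEquiv_inl_of_ne h hJ]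
    exact unitaryU_eKb (.inl _)
  · rw [eH, dif_pos h, eU, dif_pos (validU_of_validH_top h), ← idxEquiv_inl_top h]
    exact unitaryU_eKb (.inl _)
  · rw [eH, dif_pos h, eU, dif_pos (validU_of_validH h), ← idxEquiv_inr h]
    exact unitaryU_eKb (.inr _)

/-- The map `U`, defined on basis vectors, extends to a unitary from `H ⊕ H`
onto `𝓗` intertwining the diagonal operators: each basis vector of `H ⊕ H` is mapped to a basis
vector of `𝓗` whose `D`-eigenvalue equals the `D₁ ⊕ |D₂|`-eigenvalue of the source, i.e.
`D(Uξ) = U((D₁ ⊕ |D₂|)ξ)` for every basis vector `ξ`; consequently `U(D₁ ⊕ |D₂|)U* = D`. -/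
theorem exists_unitary_intertwiner :
    ∃ U : Ksp ≃ₗᵢ[ℂ] Wsp, IsUmap U ∧
      ∀ ξ : IdxH ⊕ IdxH, ∃ η : IdxW,
        U (eKb ξ) = lp.single 2 η 1 ∧ muW η = lamK ξ :=
  ⟨unitaryU, isUmap_unitaryU, fun ξ => ⟨idxEquiv ξ, unitaryU_eKb ξ, muW_idxEquiv ξ⟩⟩
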